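/- arXiv:math/0310254 — 3 statements merged into one kernel-verified Lean document; each statement's English description precedes it below -/
import Mathlib

section
/- Let p be a prime, let L ⊆ K be a purely inseparable extension of fields of characteristic p, and let n be a positive integer coprime to p. Then the inclusion L ⊆ K induces a group isomorphism L^×/(L^×)^n ≅ K^×/(K^×)^n; equivalently, the group homomorphism L^×/(L^×)^n → K^×/(K^×)^n induced by the inclusion of unit groups L^× ⊆ K^× is bijective. (Lemma 6.1 of the paper.) -/
/-!
Modulo `n`-th powers every element has order dividing `n`, so, as `n` is coprime to `p`, an
element lies in a subgroup (in particular is trivial) as soon as one of its `p ^ m`-th powers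
does. Every unit of `K` has a `p ^ m`-th power coming from `Lˣ`: this gives surjectivity, and,
together with injectivity of `L → K`, injectivity.
-/

theorem Subgroup.mem_of_pow_mem_of_coprime {G : Type*} [Group G] (S : Subgroup G) {x : G}
    {k n : ℕ} (hkn : k.Coprime n) (hk : x ^ k ∈ S) (hn : x ^ n ∈ S) : x ∈ S := by
  have hbezout : x = (x ^ k) ^ k.gcdA n * (x ^ n) ^ k.gcdB n := by
    rw [← zpow_natCast, ← zpow_natCast, ← zpow_mul, ← zpow_mul, ← zpow_add,
      ← Nat.gcd_eq_gcd_ab, hkn, Nat.cast_one, zpow_one]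
  rw [hbezout]
  exact mul_mem (zpow_mem hk _) (zpow_mem hn _)

namespace QuotientGroup

variable {H G : Type*} [CommGroup H] [CommGroup G]

theorem pow_eq_one_of_range_powMonoidHom {n : ℕ} (x : G ⧸ (powMonoidHom n : G →* G).range) :
    x ^ n = 1 := by
  induction x using QuotientGroup.induction_on with
  | H a => rw [← mk_pow, eq_one_iff]; exact ⟨a, rfl⟩

theorem range_powMonoidHom_le_comap (f : H →* G) (n : ℕ) :
    (powMonoidHom n : H →* H).range ≤ (powMonoidHom n : G →* G).range.comap f := by
  rintro _ ⟨a, rfl⟩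
  exact ⟨f a, (map_pow f a n).symm⟩

abbrev mapPowQuotient (f : H →* G) (n : ℕ) :
    H ⧸ (powMonoidHom n : H →* H).range →* G ⧸ (powMonoidHom n : G →* G).range :=
  map _ _ f (range_powMonoidHom_le_comap f n)

variable {f : H →* G} {n q : ℕ}

theorem mapPowQuotient_surjective (hnq : n.Coprime q)
    (hpow : ∀ b : G, ∃ m : ℕ, b ^ q ^ m ∈ f.range) : Function.Surjective (mapPowQuotient f n) := by
  rw [← MonoidHom.range_eq_top, eq_top_iff]
  intro y _
  induction y using QuotientGroup.induction_on with
  | H b =>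
    obtain ⟨m, c, hc⟩ := hpow b
    refine (mapPowQuotient f n).range.mem_of_pow_mem_of_coprime (hnq.pow_right m)
      (by rw [pow_eq_one_of_range_powMonoidHom]; exact one_mem _) ⟨c, ?_⟩
    rw [map_mk, hc, mk_pow]

theorem mapPowQuotient_injective (hf : Function.Injective f) (hnq : n.Coprime q)
    (hpow : ∀ b : G, ∃ m : ℕ, b ^ q ^ m ∈ f.range) : Function.Injective (mapPowQuotient f n) := by
  rw [← MonoidHom.ker_eq_bot_iff, eq_bot_iff]
  intro x hx
  induction x using QuotientGroup.induction_on with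
  | H a =>
    obtain ⟨b, hb⟩ := (eq_one_iff _).mp hx
    obtain ⟨m, c, hc⟩ := hpow b
    have hac : a ^ q ^ m = c ^ n := hf <| by
      rw [map_pow, map_pow, hc, ← hb, powMonoidHom_apply, ← pow_mul, ← pow_mul, mul_comm]
    refine (⊥ : Subgroup _).mem_of_pow_mem_of_coprime (hnq.pow_right m)
      (by rw [pow_eq_one_of_range_powMonoidHom]; exact one_mem _) ?_
    rw [Subgroup.mem_bot, ← mk_pow, hac, mk_pow, pow_eq_one_of_range_powMonoidHom]

end QuotientGroup

theorem Units.mem_range_map_of_val_mem_range {L K : Type*} [DivisionRing L] [Ring K]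
    [Nontrivial K] (f : L →+* K) {b : Kˣ} (hb : (b : K) ∈ f.range) :
    b ∈ (Units.map (f : L →* K)).range := by
  obtain ⟨c, hc⟩ := hb
  have hc0 : c ≠ 0 := by
    rintro rfl
    exact b.ne_zero (by rw [← hc, map_zero])
  exact ⟨Units.mk0 c hc0, Units.ext hc⟩

/-- **Lemma 6.1.** Let `p` be a prime, `L ⊆ K` a purely inseparable extension of fields of
characteristic `p`, and `n` a positive integer coprime to `p`. Then the inclusion `L ⊆ K`
induces a group isomorphism `Lˣ/(Lˣ)ⁿ ≅ Kˣ/(Kˣ)ⁿ`, i.e. the homomorphism induced by the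
inclusion of unit groups is bijective. -/
theorem purelyInseparable_units_mod_nth_powers_bijective
    (p : ℕ) (L K : Type*) [Field L] [Field K] [Algebra L K]
    (hins : ∀ x : K, ∃ m : ℕ, x ^ p ^ m ∈ (algebraMap L K).range)
    (n : ℕ) (hcop : Nat.Coprime n p) :
    Function.Bijective
      (QuotientGroup.map
        (powMonoidHom n : Lˣ →* Lˣ).range
        (powMonoidHom n : Kˣ →* Kˣ).range
        (Units.map (algebraMap L K : L →* K))
        (by
          rintro x ⟨y, hy⟩
          exact ⟨Units.map (algebraMap L K : L →* K) y,
            by rw [← hy]; simp [powMonoidHom_apply, map_pow]⟩)) := by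
  have hpow (b : Kˣ) : ∃ m : ℕ, b ^ p ^ m ∈ (Units.map (algebraMap L K : L →* K)).range :=
    (hins b).imp fun _ hm => Units.mem_range_map_of_val_mem_range _ (by simpa using hm)
  exact ⟨QuotientGroup.mapPowQuotient_injective (Units.map_injective (algebraMap L K).injective) hcop hpow,
    QuotientGroup.mapPowQuotient_surjective hcop hpow⟩
end

section
/- Let p be a prime, let L ⊆ K be a purely inseparable extension of fields of characteristic p, and let n be a positive integer coprime to p. Then for every x ∈ K^× there exist y ∈ L^× and z ∈ K^× such that x = y·z^n. (Surjectivity part of Lemma 6.1: every class in K^×/(K^×)^n is represented by an element of L^×.) -/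
/-! Some `x ^ p ^ m` lies in `L`, and Bézout for the coprime `p ^ m` and `n` gives
`x = (x ^ p ^ m) ^ a * (x ^ b) ^ n`. -/

theorem Nat.Coprime.exists_eq_zpow_mul_pow {G₀ : Type*} [CommGroupWithZero G₀] {k n : ℕ}
    (h : k.Coprime n) {x : G₀} (hx : x ≠ 0) : ∃ a b : ℤ, x = (x ^ k) ^ a * (x ^ b) ^ n := by
  obtain ⟨a, b, hab⟩ := Nat.isCoprime_iff_coprime.mpr h
  refine ⟨a, b, ?_⟩
  rw [← zpow_natCast, ← zpow_natCast, ← zpow_mul, ← zpow_mul, ← zpow_add₀ hx, mul_comm (k : ℤ), hab,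
    zpow_one]

theorem purelyInseparable_units_mod_nth_powers_surjective_general
    (p : ℕ) (L K : Type*) [Field L] [Field K] [Algebra L K]
    (hins : ∀ x : K, ∃ m : ℕ, x ^ p ^ m ∈ (algebraMap L K).range)
    (n : ℕ) (hcop : Nat.Coprime n p) :
    ∀ x : K, x ≠ 0 → ∃ y : L, y ≠ 0 ∧ ∃ z : K, z ≠ 0 ∧ x = algebraMap L K y * z ^ n := by
  intro x hx
  obtain ⟨m, y, hy⟩ := hins x
  obtain ⟨a, b, hx_eq⟩ := (hcop.symm.pow_left m).exists_eq_zpow_mul_pow hx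
  have hy0 : y ≠ 0 := by
    rintro rfl
    exact pow_ne_zero _ hx (by rw [← hy, map_zero])
  refine ⟨y ^ a, zpow_ne_zero a hy0, x ^ b, zpow_ne_zero b hx, ?_⟩
  rwa [map_zpow₀, hy]

/-- **Surjectivity part of Lemma 6.1.** Let `p` be a prime, `L ⊆ K` a purely inseparable
extension of fields of characteristic `p`, and `n` a positive integer coprime to `p`. Then
every `x ∈ Kˣ` can be written as `x = y * zⁿ` with `y ∈ Lˣ` and `z ∈ Kˣ`; i.e. every class in
`Kˣ/(Kˣ)ⁿ` is represented by an element of `Lˣ`. -/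
theorem purelyInseparable_units_mod_nth_powers_surjective
    (p : ℕ) (hp : p.Prime) (L K : Type*) [Field L] [Field K] [Algebra L K]
    [CharP L p] [CharP K p]
    (hins : ∀ x : K, ∃ m : ℕ, x ^ p ^ m ∈ (algebraMap L K).range)
    (n : ℕ) (hn : 0 < n) (hcop : Nat.Coprime n p) :
    ∀ x : K, x ≠ 0 → ∃ y : L, y ≠ 0 ∧ ∃ z : K, z ≠ 0 ∧ x = algebraMap L K y * z ^ n :=
  purelyInseparable_units_mod_nth_powers_surjective_general p L K hins n hcop
end

section
/- Let G be a commutative group, H ≤ G a subgroup, p a prime, and n a positive integer coprime to p. Assume that for every g ∈ G there exists an integer m ≥ 0 with g^(p^m) ∈ H. Then the inclusion H → G induces a group isomorphism H/H^n ≅ G/G^n, i.e., the induced homomorphism from H modulo the subgroup of n-th powers of H to G modulo the subgroup of n-th powers of G is bijective. (This is the group-theoretic core of the proof of Lemma 6.1: since p^m and n are coprime, writing 1 = a·p^m + b·n gives both surjectivity and injectivity.) -/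
/-!
Since `n` is coprime to `p ^ m`, every `g` is a product of a power of `g ^ p ^ m ∈ H` and an
`n`-th power, which gives surjectivity. For injectivity, if `g ^ n ∈ H` then `g` is a product of
powers of `g ^ n` and `g ^ p ^ m`, so `g ∈ H`: an element of `H` that is an `n`-th power in `G` is
already an `n`-th power in `H`.
-/

open Function

section Bezout

variable {G : Type*} [Group G] {H : Subgroup G} {g : G} {k n : ℕ}

variable (g k n) in
theorem zpow_gcdA_mul_zpow_gcdB :
    (g ^ k) ^ Nat.gcdA k n * (g ^ n) ^ Nat.gcdB k n = g ^ Nat.gcd k n := by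
  rw [← zpow_natCast g k, ← zpow_natCast g n, ← zpow_mul, ← zpow_mul, ← zpow_add,
    ← Nat.gcd_eq_gcd_ab, zpow_natCast]

theorem Subgroup.mem_of_pow_mem_of_pow_mem_of_coprime (hkn : k.Coprime n) (hk : g ^ k ∈ H)
    (hn : g ^ n ∈ H) : g ∈ H := by
  have hg := zpow_gcdA_mul_zpow_gcdB g k n
  rw [hkn.gcd_eq_one, pow_one] at hg
  exact hg ▸ H.mul_mem (H.zpow_mem hk _) (H.zpow_mem hn _)

theorem Subgroup.exists_mem_mul_pow_eq_of_coprime (hkn : k.Coprime n) (hk : g ^ k ∈ H) :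
    ∃ h ∈ H, ∃ y : G, h * y ^ n = g := by
  refine ⟨(g ^ k) ^ Nat.gcdA k n, H.zpow_mem hk _, g ^ Nat.gcdB k n, ?_⟩
  rw [← zpow_natCast (g ^ _) n, ← zpow_mul, mul_comm (Nat.gcdB k n), zpow_mul, zpow_natCast,
    zpow_gcdA_mul_zpow_gcdB, hkn.gcd_eq_one, pow_one]

end Bezout

section PowQuotient

variable {G : Type*} [CommGroup G] (H : Subgroup G) (n : ℕ)

theorem Subgroup.range_powMonoidHom_le_comap_subtype :
    (powMonoidHom n : H →* H).range ≤ (powMonoidHom n : G →* G).range.comap H.subtype := by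
  rintro _ ⟨y, rfl⟩
  exact ⟨y, rfl⟩

theorem QuotientGroup.map_subtype_powMonoidHom_injective
    (h : ∀ g : G, ∃ k, k.Coprime n ∧ g ^ k ∈ H) :
    Injective (QuotientGroup.map _ _ H.subtype (H.range_powMonoidHom_le_comap_subtype n)) := by
  intro x y hxy
  induction x using QuotientGroup.induction_on with | H x => ?_
  induction y using QuotientGroup.induction_on with | H y => ?_
  rw [QuotientGroup.map_mk, QuotientGroup.map_mk, QuotientGroup.eq] at hxy
  rw [QuotientGroup.eq]
  obtain ⟨g, hg : g ^ n = (x : G)⁻¹ * y⟩ := hxy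
  obtain ⟨k, hkn, hk⟩ := h g
  have hgH : g ∈ H := H.mem_of_pow_mem_of_pow_mem_of_coprime hkn hk
    (hg ▸ H.mul_mem (H.inv_mem x.2) y.2)
  exact ⟨⟨g, hgH⟩, Subtype.ext hg⟩

theorem QuotientGroup.map_subtype_powMonoidHom_surjective
    (h : ∀ g : G, ∃ k, k.Coprime n ∧ g ^ k ∈ H) :
    Surjective (QuotientGroup.map _ _ H.subtype (H.range_powMonoidHom_le_comap_subtype n)) := by
  intro z
  induction z using QuotientGroup.induction_on with | H g => ?_
  obtain ⟨k, hkn, hk⟩ := h g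
  obtain ⟨a, ha, y, rfl⟩ := H.exists_mem_mul_pow_eq_of_coprime hkn hk
  refine ⟨QuotientGroup.mk ⟨a, ha⟩, ?_⟩
  rw [QuotientGroup.map_mk, QuotientGroup.eq]
  exact ⟨y, by simp⟩

end PowQuotient

/-- **Group-theoretic core of Lemma 6.1.** Let `G` be a commutative group, `H ≤ G` a subgroup,
`p` a prime and `n` a positive integer coprime to `p`. If for every `g ∈ G` there is an
`m ≥ 0` with `g ^ (p ^ m) ∈ H`, then the inclusion `H → G` induces a group isomorphism
`H/Hⁿ ≅ G/Gⁿ`, i.e. the induced homomorphism on the quotients by the subgroups of `n`-th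
powers is bijective. -/
theorem subgroup_mod_nth_powers_bijective
    (G : Type*) [CommGroup G] (H : Subgroup G) (p : ℕ)
    (n : ℕ) (hcop : Nat.Coprime n p)
    (hpow : ∀ g : G, ∃ m : ℕ, g ^ p ^ m ∈ H) :
    Function.Bijective
      (QuotientGroup.map
        (powMonoidHom n : H →* H).range
        (powMonoidHom n : G →* G).range
        H.subtype
        (by
          rintro x ⟨y, hy⟩
          exact ⟨(y : G), by rw [← hy]; simp [powMonoidHom_apply]⟩)) := by
  have h : ∀ g : G, ∃ k, k.Coprime n ∧ g ^ k ∈ H := fun g ↦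
    (hpow g).imp' (p ^ ·) fun m hm ↦ ⟨(hcop.pow_right m).symm, hm⟩
  exact ⟨QuotientGroup.map_subtype_powMonoidHom_injective H n h,
    QuotientGroup.map_subtype_powMonoidHom_surjective H n h⟩
end
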